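/- Let V be a finite-dimensional real inner product space, X ⊂ V \ {0} finite, a ∈ V_C, and v ∈ V. For φ ∈ M(a,X) (germ of meromorphic function with singularities along X-hyperplanes through a), the directional derivative ∂_v φ also belongs to M(a,X); moreover, the transpose ∂_v^* of ∂_v maps M(a,X)*_laur into itself, i.e. for every X-Laurent functional L at a, the functional φ ↦ L(∂_v φ) is again an X-Laurent functional at a. -/

import Mathlib

namespace LaurentFunctionals

variable {n : ℕ}

/-- The complex bilinear pairing `⟨ξ, z⟩` of `ξ ∈ ℝⁿ` with `z ∈ ℂⁿ`. -/
noncomputable def cpair (ξ : Fin n → ℝ) (z : Fin n → ℂ) : ℂ := ∑ i, (ξ i : ℂ) * z i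

/-- The germ filter at `a`: neighborhoods of `a` intersected with the complement of the
union of the `X`-hyperplanes through `a`.  Germs of meromorphic functions at `a` with
singular locus along these hyperplanes are germs of functions along this filter. -/
noncomputable def germFilter (X : Finset (Fin n → ℝ)) (a : Fin n → ℂ) :
    Filter (Fin n → ℂ) :=
  nhds a ⊓ Filter.principal {z | ∀ ξ ∈ X, cpair ξ (z - a) ≠ 0}

/-- The polynomial `π_{a,d}(z) = ∏_{ξ ∈ X} ⟨ξ, z − a⟩^{d ξ}`. -/
noncomputable def piPoly (X : Finset (Fin n → ℝ)) (a : Fin n → ℂ)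
    (d : (Fin n → ℝ) → ℕ) : (Fin n → ℂ) → ℂ :=
  fun z => ∏ ξ ∈ X, cpair ξ (z - a) ^ d ξ

/-- The meromorphic function `π_{a,d}⁻¹ · g`. -/
noncomputable def mero (X : Finset (Fin n → ℝ)) (a : Fin n → ℂ)
    (d : (Fin n → ℝ) → ℕ) (g : (Fin n → ℂ) → ℂ) : (Fin n → ℂ) → ℂ :=
  fun z => (piPoly X a d z)⁻¹ * g z

/-- `O_a`: germs at `a` of holomorphic functions. -/
def Oa (X : Finset (Fin n → ℝ)) (a : Fin n → ℂ) :
    Set (Filter.Germ (germFilter X a) ℂ) :=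
  {φ | ∃ g : (Fin n → ℂ) → ℂ, AnalyticAt ℂ g a ∧
    φ = (g : Filter.Germ (germFilter X a) ℂ)}

/-- `M(a, X)`: germs at `a` of meromorphic functions whose singular locus at `a` lies in
the union of the `X`-hyperplanes through `a`; equivalently `∪_d π_{a,d}⁻¹ O_a`. -/
def Ma (X : Finset (Fin n → ℝ)) (a : Fin n → ℂ) :
    Set (Filter.Germ (germFilter X a) ℂ) :=
  {φ | ∃ (d : (Fin n → ℝ) → ℕ) (g : (Fin n → ℂ) → ℂ), AnalyticAt ℂ g a ∧
    φ = (mero X a d g : Filter.Germ (germFilter X a) ℂ)}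

/-- The directional derivative operator `∂_v`. -/
noncomputable def dirD (v : Fin n → ℂ) (g : (Fin n → ℂ) → ℂ) : (Fin n → ℂ) → ℂ :=
  fun z => fderiv ℂ g z v

/-- The composition of directional derivatives along the word `w`. -/
noncomputable def applyWord (w : List (Fin n → ℂ)) (g : (Fin n → ℂ) → ℂ) :
    (Fin n → ℂ) → ℂ :=
  w.foldr dirD g

/-- The action of an element `u ∈ S(V)` — a complex linear combination of words of
directional derivatives — on a function. -/
noncomputable def applyOp (u : List (ℂ × List (Fin n → ℂ))) (g : (Fin n → ℂ) → ℂ)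
    (z : Fin n → ℂ) : ℂ :=
  (u.map fun p => p.1 * applyWord p.2 g z).sum

/-- `L` is an `X`-Laurent functional at `a`: a linear functional on `M(a, X)` such that
for every `d : X → ℕ` there is `u_d ∈ S(V)` with `L φ = u_d(π_{a,d} φ)(a)` for all
`φ ∈ π_{a,d}⁻¹ O_a`. -/
def IsLaurentAt (X : Finset (Fin n → ℝ)) (a : Fin n → ℂ)
    (L : Filter.Germ (germFilter X a) ℂ → ℂ) : Prop :=
  (∀ φ ψ : Filter.Germ (germFilter X a) ℂ, φ ∈ Ma X a → ψ ∈ Ma X a →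
    L (φ + ψ) = L φ + L ψ) ∧
  (∀ (z : ℂ) (φ : Filter.Germ (germFilter X a) ℂ), φ ∈ Ma X a →
    L (z • φ) = z * L φ) ∧
  (∀ d : (Fin n → ℝ) → ℕ, ∃ u : List (ℂ × List (Fin n → ℂ)),
    ∀ g : (Fin n → ℂ) → ℂ, AnalyticAt ℂ g a →
      L (mero X a d g : Filter.Germ (germFilter X a) ℂ) = applyOp u g a)


/-- The complexification of the real direction vector `v`. -/
noncomputable def cOf (v : Fin n → ℝ) : Fin n → ℂ := fun i => (v i : ℂ)

/-!
Writing `φ = π_{a,d}⁻¹ g` with `g` holomorphic at `a`, the quotient rule gives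
`∂_v φ = π_{a,2d}⁻¹ (π_{a,d} ∂_v g − (∂_v π_{a,d}) g)`, so `∂_v φ ∈ M(a, X)`. Hence if `L` is
represented on `π_{a,2d}⁻¹ O_a` by `u ∈ S(V)`, then `φ ↦ L(∂_v φ)` is represented on
`π_{a,d}⁻¹ O_a` by the operator `g ↦ u(π_{a,d} ∂_v g − (∂_v π_{a,d}) g)(a)`, which the Leibniz
rule rewrites as an element of `S(V)` evaluated at `a`. Since the complement of the
`X`-hyperplanes is open, `∂_v` is well defined on germs along it.
-/

open Filter Topology

section DirectionalDerivative

variable {v : Fin n → ℂ} {f g p : (Fin n → ℂ) → ℂ} {a z : Fin n → ℂ}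

lemma analyticAt_dirD (hf : AnalyticAt ℂ f z) : AnalyticAt ℂ (dirD v f) z :=
  ((ContinuousLinearMap.apply ℂ ℂ v).analyticAt _).comp hf.fderiv

lemma dirD_congr_nhds (h : f =ᶠ[𝓝 a] g) : dirD v f =ᶠ[𝓝 a] dirD v g :=
  (h.fderiv (𝕜 := ℂ)).mono fun z hz => by simp only [dirD, hz]

lemma dirD_add_eventuallyEq {l : Filter (Fin n → ℂ)}
    (hf : ∀ᶠ z in l, DifferentiableAt ℂ f z) (hg : ∀ᶠ z in l, DifferentiableAt ℂ g z) :
    dirD v (f + g) =ᶠ[l] dirD v f + dirD v g := by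
  filter_upwards [hf, hg] with z hfz hgz
  simp [dirD, fderiv_add hfz hgz]

lemma dirD_neg (f : (Fin n → ℂ) → ℂ) : dirD v (-f) = -dirD v f := by
  funext z
  simp [dirD, fderiv_neg]

lemma dirD_const_smul (c : ℂ) (f : (Fin n → ℂ) → ℂ) : dirD v (c • f) = c • dirD v f := by
  funext z
  simp [dirD, fderiv_const_smul_field]

lemma dirD_mul_apply (hp : DifferentiableAt ℂ p z) (hf : DifferentiableAt ℂ f z) :
    dirD v (p * f) z = dirD v p z * f z + p z * dirD v f z := by
  simp only [dirD, fderiv_mul hp hf, add_apply, smul_apply, smul_eq_mul]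
  ring

lemma dirD_inv_mul_apply (hp : DifferentiableAt ℂ p z) (hpz : p z ≠ 0)
    (hf : DifferentiableAt ℂ f z) :
    dirD v (fun w => (p w)⁻¹ * f w) z
      = (p z ^ 2)⁻¹ * (p z * dirD v f z - dirD v p z * f z) := by
  have hinv : HasFDerivAt (fun w => (p w)⁻¹) ((-(p z ^ 2)⁻¹) • fderiv ℂ p z) z :=
    (hasDerivAt_inv hpz).comp_hasFDerivAt z hp.hasFDerivAt
  rw [dirD, (hinv.fun_mul hf.hasFDerivAt).fderiv]
  simp only [add_apply, smul_apply, smul_eq_mul, dirD]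
  field_simp
  ring

end DirectionalDerivative

section Words

variable {f g : (Fin n → ℂ) → ℂ} {a : Fin n → ℂ}

lemma applyWord_append_singleton (w : List (Fin n → ℂ)) (v : Fin n → ℂ)
    (f : (Fin n → ℂ) → ℂ) : applyWord (w ++ [v]) f = applyWord w (dirD v f) := by
  simp [applyWord]

lemma analyticAt_applyWord (w : List (Fin n → ℂ)) (hf : AnalyticAt ℂ f a) :
    AnalyticAt ℂ (applyWord w f) a := by
  induction w with
  | nil => exact hf
  | cons v w ih => exact analyticAt_dirD ih

lemma applyWord_congr_nhds (w : List (Fin n → ℂ)) (h : f =ᶠ[𝓝 a] g) :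
    applyWord w f =ᶠ[𝓝 a] applyWord w g := by
  induction w with
  | nil => exact h
  | cons v w ih => exact dirD_congr_nhds ih

lemma applyWord_add (w : List (Fin n → ℂ)) (hf : AnalyticAt ℂ f a) (hg : AnalyticAt ℂ g a) :
    applyWord w (f + g) =ᶠ[𝓝 a] applyWord w f + applyWord w g := by
  induction w with
  | nil => exact EventuallyEq.rfl
  | cons v w ih =>
    have differentiable {h : (Fin n → ℂ) → ℂ} (hh : AnalyticAt ℂ h a) :
        ∀ᶠ z in 𝓝 a, DifferentiableAt ℂ (applyWord w h) z :=
      (analyticAt_applyWord w hh).eventually_analyticAt.mono fun _ hz => hz.differentiableAt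
    exact (dirD_congr_nhds ih).trans (dirD_add_eventuallyEq (differentiable hf) (differentiable hg))

lemma applyWord_neg (w : List (Fin n → ℂ)) (f : (Fin n → ℂ) → ℂ) :
    applyWord w (-f) = -applyWord w f := by
  induction w with
  | nil => rfl
  | cons v w ih =>
    change dirD v (applyWord w (-f)) = -dirD v (applyWord w f)
    rw [ih, dirD_neg]

lemma applyWord_sub_apply (w : List (Fin n → ℂ)) (hf : AnalyticAt ℂ f a)
    (hg : AnalyticAt ℂ g a) : applyWord w (f - g) a = applyWord w f a - applyWord w g a := by
  rw [sub_eq_add_neg, (applyWord_add w hf hg.neg).eq_of_nhds, Pi.add_apply, applyWord_neg,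
    Pi.neg_apply, sub_eq_add_neg]

end Words

/-- The form `g ↦ u(g)(a)`, `u ∈ S(V)`, that a Laurent functional takes on each
`π_{a,d}⁻¹ O_a`. -/
def IsDiffOpAt (a : Fin n → ℂ) (T : ((Fin n → ℂ) → ℂ) → ℂ) : Prop :=
  ∃ u : List (ℂ × List (Fin n → ℂ)), ∀ g, AnalyticAt ℂ g a → T g = applyOp u g a

namespace IsDiffOpAt

variable {a : Fin n → ℂ} {T S : ((Fin n → ℂ) → ℂ) → ℂ}

lemma congr (hT : IsDiffOpAt a T) (h : ∀ g, AnalyticAt ℂ g a → T g = S g) :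
    IsDiffOpAt a S := by
  obtain ⟨u, hu⟩ := hT
  exact ⟨u, fun g hg => (h g hg).symm.trans (hu g hg)⟩

lemma zero : IsDiffOpAt a fun _ => 0 :=
  ⟨[], fun _ _ => by simp [applyOp]⟩

lemma add (hT : IsDiffOpAt a T) (hS : IsDiffOpAt a S) : IsDiffOpAt a fun g => T g + S g := by
  obtain ⟨u, hu⟩ := hT
  obtain ⟨u', hu'⟩ := hS
  exact ⟨u ++ u', fun g hg => by simp [applyOp, hu g hg, hu' g hg]⟩

lemma const_mul (c : ℂ) (hT : IsDiffOpAt a T) : IsDiffOpAt a fun g => c * T g := by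
  obtain ⟨u, hu⟩ := hT
  refine ⟨u.map fun q => (c * q.1, q.2), fun g hg => ?_⟩
  simp only [hu g hg, applyOp, List.map_map, Function.comp_def, mul_assoc, List.sum_map_mul_left]

lemma sub (hT : IsDiffOpAt a T) (hS : IsDiffOpAt a S) : IsDiffOpAt a fun g => T g - S g :=
  (hT.add (hS.const_mul (-1))).congr fun _ _ => by ring

lemma comp_dirD (v : Fin n → ℂ) (hT : IsDiffOpAt a T) : IsDiffOpAt a fun g => T (dirD v g) := by
  obtain ⟨u, hu⟩ := hT
  refine ⟨u.map fun q => (q.1, q.2 ++ [v]), fun g hg => ?_⟩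
  simp [hu _ (analyticAt_dirD hg), applyOp, Function.comp_def, applyWord_append_singleton]

lemma applyOp_comp {F : ((Fin n → ℂ) → ℂ) → (Fin n → ℂ) → ℂ}
    (hF : ∀ w, IsDiffOpAt a fun g => applyWord w (F g) a)
    (u : List (ℂ × List (Fin n → ℂ))) : IsDiffOpAt a fun g => applyOp u (F g) a := by
  induction u with
  | nil => exact zero.congr fun _ _ => by simp [applyOp]
  | cons q u ih => exact (((hF q.2).const_mul q.1).add ih).congr fun _ _ => by simp [applyOp]

end IsDiffOpAt

lemma isDiffOpAt_applyWord_mul {a : Fin n → ℂ} (w : List (Fin n → ℂ)) :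
    ∀ p : (Fin n → ℂ) → ℂ, AnalyticAt ℂ p a →
      IsDiffOpAt a fun g => applyWord w (p * g) a := by
  induction w using List.reverseRecOn with
  | nil => exact fun p _ => ⟨[(p a, [])], fun _ _ => by simp [applyOp, applyWord]⟩
  | append_singleton w v ih =>
    intro p hp
    refine ((ih (dirD v p) (analyticAt_dirD hp)).add ((ih p hp).comp_dirD v)).congr fun g hg => ?_
    have leibniz : dirD v (p * g) =ᶠ[𝓝 a] dirD v p * g + p * dirD v g := by
      filter_upwards [hp.eventually_analyticAt, hg.eventually_analyticAt] with z hpz hgz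
      exact dirD_mul_apply hpz.differentiableAt hgz.differentiableAt
    rw [applyWord_append_singleton, (applyWord_congr_nhds w leibniz).eq_of_nhds,
      (applyWord_add w ((analyticAt_dirD hp).mul hg) (hp.mul (analyticAt_dirD hg))).eq_of_nhds,
      Pi.add_apply]

lemma IsDiffOpAt.comp_mul_dirD_sub_dirD_mul {a : Fin n → ℂ} {T : ((Fin n → ℂ) → ℂ) → ℂ}
    {p : (Fin n → ℂ) → ℂ} (v : Fin n → ℂ) (hT : IsDiffOpAt a T) (hp : AnalyticAt ℂ p a) :
    IsDiffOpAt a fun g => T (p * dirD v g - dirD v p * g) := by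
  obtain ⟨u, hu⟩ := hT
  have hword (w : List (Fin n → ℂ)) :
      IsDiffOpAt a fun g => applyWord w (p * dirD v g - dirD v p * g) a :=
    (((isDiffOpAt_applyWord_mul w p hp).comp_dirD v).sub
      (isDiffOpAt_applyWord_mul w _ (analyticAt_dirD hp))).congr fun g hg =>
      (applyWord_sub_apply w (hp.mul (analyticAt_dirD hg)) ((analyticAt_dirD hp).mul hg)).symm
  exact (IsDiffOpAt.applyOp_comp hword u).congr fun g hg =>
    (hu _ ((hp.mul (analyticAt_dirD hg)).sub ((analyticAt_dirD hp).mul hg))).symm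

section Germs

variable {X : Finset (Fin n → ℝ)} {a : Fin n → ℂ} {d : (Fin n → ℝ) → ℕ}
  {v : Fin n → ℂ} {f g : (Fin n → ℂ) → ℂ}

def hyperplaneCompl (X : Finset (Fin n → ℝ)) (a : Fin n → ℂ) : Set (Fin n → ℂ) :=
  {z | ∀ ξ ∈ X, cpair ξ (z - a) ≠ 0}

lemma germFilter_eq_nhdsWithin : germFilter X a = 𝓝[hyperplaneCompl X a] a := rfl

lemma analyticAt_cpair_sub (ξ : Fin n → ℝ) (a z : Fin n → ℂ) :
    AnalyticAt ℂ (fun w => cpair ξ (w - a)) z :=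
  Finset.analyticAt_fun_sum _ fun i _ => analyticAt_const.mul
    (((ContinuousLinearMap.proj i : (Fin n → ℂ) →L[ℂ] ℂ).analyticAt z).sub analyticAt_const)

lemma isOpen_hyperplaneCompl (X : Finset (Fin n → ℝ)) (a : Fin n → ℂ) :
    IsOpen (hyperplaneCompl X a) := by
  refine isOpen_iff_mem_nhds.2 fun z hz => (eventually_all_finset X).2 fun ξ hξ => ?_
  exact (analyticAt_cpair_sub ξ a z).continuousAt.eventually_ne (hz ξ hξ)

lemma analyticAt_piPoly (X : Finset (Fin n → ℝ)) (a : Fin n → ℂ) (d : (Fin n → ℝ) → ℕ)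
    (z : Fin n → ℂ) : AnalyticAt ℂ (piPoly X a d) z :=
  Finset.analyticAt_fun_prod _ fun ξ _ => (analyticAt_cpair_sub ξ a z).pow _

lemma piPoly_ne_zero {z : Fin n → ℂ} (hz : z ∈ hyperplaneCompl X a) : piPoly X a d z ≠ 0 :=
  Finset.prod_ne_zero_iff.2 fun ξ hξ => pow_ne_zero _ (hz ξ hξ)

lemma piPoly_two_mul (z : Fin n → ℂ) : piPoly X a (fun ξ => 2 * d ξ) z = piPoly X a d z ^ 2 := by
  simp only [piPoly, ← Finset.prod_pow, ← pow_mul, mul_comm]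

lemma eventually_nhds_of_germFilter {P : (Fin n → ℂ) → Prop}
    (h : ∀ᶠ z in germFilter X a, P z) : ∀ᶠ z in germFilter X a, ∀ᶠ w in 𝓝 z, P w := by
  rw [germFilter_eq_nhdsWithin, ← eventually_eventually_nhdsWithin] at h
  filter_upwards [h, self_mem_nhdsWithin] with z hz hzS
  rwa [(isOpen_hyperplaneCompl X a).nhdsWithin_eq hzS] at hz

lemma dirD_congr_germFilter (h : f =ᶠ[germFilter X a] g) :
    dirD v f =ᶠ[germFilter X a] dirD v g := by
  filter_upwards [eventually_nhds_of_germFilter h] with z hz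
  simp only [dirD, EventuallyEq.fderiv_eq (𝕜 := ℂ) hz]

lemma eventually_analyticAt_mero (hg : AnalyticAt ℂ g a) :
    ∀ᶠ z in germFilter X a, AnalyticAt ℂ (mero X a d g) z := by
  filter_upwards [self_mem_nhdsWithin, hg.eventually_analyticAt.filter_mono inf_le_left]
    with z hz hgz
  exact ((analyticAt_piPoly X a d z).inv (piPoly_ne_zero hz)).mul hgz

lemma dirD_mero (hg : AnalyticAt ℂ g a) :
    dirD v (mero X a d g) =ᶠ[germFilter X a]
      mero X a (fun ξ => 2 * d ξ) (piPoly X a d * dirD v g - dirD v (piPoly X a d) * g) := by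
  filter_upwards [self_mem_nhdsWithin, hg.eventually_analyticAt.filter_mono inf_le_left]
    with z hz hgz
  change dirD v (fun w => (piPoly X a d w)⁻¹ * g w) z = _
  rw [dirD_inv_mul_apply (analyticAt_piPoly X a d z).differentiableAt (piPoly_ne_zero hz)
    hgz.differentiableAt, mero, piPoly_two_mul]
  rfl

noncomputable def germDirD (X : Finset (Fin n → ℝ)) (a v : Fin n → ℂ) :
    Germ (germFilter X a) ℂ → Germ (germFilter X a) ℂ :=
  Germ.map' (dirD v) fun _ _ => dirD_congr_germFilter

lemma germDirD_coe (f : (Fin n → ℂ) → ℂ) :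
    germDirD X a v f = (dirD v f : Germ (germFilter X a) ℂ) := rfl

lemma germDirD_mem_Ma {φ : Germ (germFilter X a) ℂ} (hφ : φ ∈ Ma X a) :
    germDirD X a v φ ∈ Ma X a := by
  obtain ⟨d, g, hg, rfl⟩ := hφ
  have hπ := analyticAt_piPoly X a d a
  exact ⟨_, _, (hπ.mul (analyticAt_dirD hg)).sub ((analyticAt_dirD hπ).mul hg),
    Germ.coe_eq.2 (dirD_mero hg)⟩

lemma germDirD_add {φ ψ : Germ (germFilter X a) ℂ} (hφ : φ ∈ Ma X a) (hψ : ψ ∈ Ma X a) :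
    germDirD X a v (φ + ψ) = germDirD X a v φ + germDirD X a v ψ := by
  obtain ⟨d, g, hg, rfl⟩ := hφ
  obtain ⟨e, h, hh, rfl⟩ := hψ
  have differentiable {d g} (hg : AnalyticAt ℂ g a) :
      ∀ᶠ z in germFilter X a, DifferentiableAt ℂ (mero X a d g) z :=
    (eventually_analyticAt_mero hg).mono fun _ hz => hz.differentiableAt
  rw [← Germ.coe_add, germDirD_coe, germDirD_coe, germDirD_coe, ← Germ.coe_add, Germ.coe_eq]
  exact dirD_add_eventuallyEq (differentiable hg) (differentiable hh)

lemma germDirD_smul (c : ℂ) (φ : Germ (germFilter X a) ℂ) :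
    germDirD X a v (c • φ) = c • germDirD X a v φ := by
  induction φ using Germ.inductionOn with
  | h f => rw [← Germ.coe_smul, germDirD_coe, germDirD_coe, dirD_const_smul, Germ.coe_smul]

end Germs

lemma IsLaurentAt.comp_germDirD {X : Finset (Fin n → ℝ)} {a : Fin n → ℂ}
    {L : Germ (germFilter X a) ℂ → ℂ} (hL : IsLaurentAt X a L) (v : Fin n → ℂ) :
    IsLaurentAt X a (L ∘ germDirD X a v) := by
  obtain ⟨hadd, hsmul, hlocal⟩ := hL
  refine ⟨fun φ ψ hφ hψ => ?_, fun c φ hφ => ?_, fun d => ?_⟩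
  · rw [Function.comp_apply, germDirD_add hφ hψ]
    exact hadd _ _ (germDirD_mem_Ma hφ) (germDirD_mem_Ma hψ)
  · rw [Function.comp_apply, germDirD_smul]
    exact hsmul _ _ (germDirD_mem_Ma hφ)
  · have hnum : IsDiffOpAt a fun g =>
        L (mero X a (fun ξ => 2 * d ξ) (piPoly X a d * dirD v g - dirD v (piPoly X a d) * g)) :=
      IsDiffOpAt.comp_mul_dirD_sub_dirD_mul v (hlocal _) (analyticAt_piPoly X a d a)
    exact hnum.congr fun g hg => by
      rw [Function.comp_apply, germDirD_coe, Germ.coe_eq.2 (dirD_mero hg)]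

theorem derivative_preserves_laurent_functionals_general
    (X : Finset (Fin n → ℝ)) (a : Fin n → ℂ)
    (v : Fin n → ℝ) :
    (∀ f : (Fin n → ℂ) → ℂ, (f : Filter.Germ (germFilter X a) ℂ) ∈ Ma X a →
      (dirD (cOf v) f : Filter.Germ (germFilter X a) ℂ) ∈ Ma X a) ∧
    (∀ L : Filter.Germ (germFilter X a) ℂ → ℂ, IsLaurentAt X a L →
      ∃ L' : Filter.Germ (germFilter X a) ℂ → ℂ, IsLaurentAt X a L' ∧
        ∀ f : (Fin n → ℂ) → ℂ, (f : Filter.Germ (germFilter X a) ℂ) ∈ Ma X a →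
          L' (f : Filter.Germ (germFilter X a) ℂ)
            = L (dirD (cOf v) f : Filter.Germ (germFilter X a) ℂ)) :=
  ⟨fun _ hf => germDirD_mem_Ma hf,
    fun L hL => ⟨L ∘ germDirD X a (cOf v), hL.comp_germDirD _, fun _ _ => rfl⟩⟩

/-- For `v ∈ V`, the directional derivative `∂_v` maps `M(a, X)` into itself, and its
transpose maps `X`-Laurent functionals at `a` to `X`-Laurent functionals at `a`:
for every Laurent functional `L` at `a`, the functional `φ ↦ L(∂_v φ)` is again a
Laurent functional at `a`. -/
theorem derivative_preserves_laurent_functionals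
    (X : Finset (Fin n → ℝ)) (hX : ∀ ξ ∈ X, ξ ≠ 0) (a : Fin n → ℂ)
    (v : Fin n → ℝ) :
    (∀ f : (Fin n → ℂ) → ℂ, (f : Filter.Germ (germFilter X a) ℂ) ∈ Ma X a →
      (dirD (cOf v) f : Filter.Germ (germFilter X a) ℂ) ∈ Ma X a) ∧
    (∀ L : Filter.Germ (germFilter X a) ℂ → ℂ, IsLaurentAt X a L →
      ∃ L' : Filter.Germ (germFilter X a) ℂ → ℂ, IsLaurentAt X a L' ∧
        ∀ f : (Fin n → ℂ) → ℂ, (f : Filter.Germ (germFilter X a) ℂ) ∈ Ma X a →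
          L' (f : Filter.Germ (germFilter X a) ℂ)
            = L (dirD (cOf v) f : Filter.Germ (germFilter X a) ℂ)) :=
  derivative_preserves_laurent_functionals_general X a v

end LaurentFunctionals
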